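/- Optimal no-signal budget in the geometric example: (i) if v ≤ 2k then U(v,k,B) ≤ 0 = U(v,k,0) for every natural number B, so B* = 0 is optimal; (ii) if v > 2k then U(v,k,B) < U(v,k,B+1) for every natural number B, and U(v,k,B) → v − 2k as B → ∞, so no finite budget is optimal and the supremum of the attacker's utility is v − 2k (informally, B* = ∞ and the attacker cracks all passwords). -/

import Mathlib

/- Geometric example: Pr[pw_i] = 2^{-i}, attacker checks pw_1, pw_2, … with budget B.
Expected cost C(k,B) = k·Σ_{i=1}^{B} i·2^{-i} + k·B·2^{-B},
expected reward R(v,B) = v·Σ_{i=1}^{B} 2^{-i}, and utility U = R − C. -/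

noncomputable def C (k : ℝ) (B : ℕ) : ℝ :=
  k * (∑ i ∈ Finset.Icc 1 B, (i : ℝ) * (2 : ℝ) ^ (-(i : ℤ)))
    + k * (B : ℝ) * (2 : ℝ) ^ (-(B : ℤ))

noncomputable def R (v : ℝ) (B : ℕ) : ℝ :=
  v * ∑ i ∈ Finset.Icc 1 B, (2 : ℝ) ^ (-(i : ℤ))

noncomputable def U (v k : ℝ) (B : ℕ) : ℝ := R v B - C k B

/- Summing the geometric series, with r = 1/2 the reward is v·(1 - r^B) and the cost is
k·(2 - (B + 2) r^B) + k·B·r^B = 2k·(1 - r^B). Hence U(v,k,B) = (v - 2k)(1 - 2^{-B}): its sign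
is that of v - 2k, it increases strictly in B when v > 2k, and tends to v - 2k. -/

open Filter Finset

lemma two_zpow_neg_natCast (n : ℕ) : (2 : ℝ) ^ (-(n : ℤ)) = 2⁻¹ ^ n := by
  rw [zpow_neg, zpow_natCast, inv_pow]

lemma sum_Icc_inv_two_pow (B : ℕ) : ∑ i ∈ Icc 1 B, (2⁻¹ : ℝ) ^ i = 1 - 2⁻¹ ^ B := by
  induction B with
  | zero => simp
  | succ n ih =>
    rw [sum_Icc_succ_top (by omega), ih, pow_succ]
    ring

lemma sum_Icc_mul_inv_two_pow (B : ℕ) :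
    ∑ i ∈ Icc 1 B, (i : ℝ) * 2⁻¹ ^ i = 2 - (B + 2) * 2⁻¹ ^ B := by
  induction B with
  | zero => simp
  | succ n ih =>
    rw [sum_Icc_succ_top (by omega), ih, pow_succ]
    push_cast
    ring

lemma U_eq (v k : ℝ) (B : ℕ) : U v k B = (v - 2 * k) * (1 - 2⁻¹ ^ B) := by
  simp only [U, R, C, two_zpow_neg_natCast, sum_Icc_inv_two_pow, sum_Icc_mul_inv_two_pow]
  ring

lemma U_zero (v k : ℝ) : U v k 0 = 0 := by
  simp [U_eq]

lemma U_nonpos {v k : ℝ} (h : v ≤ 2 * k) (B : ℕ) : U v k B ≤ 0 := by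
  rw [U_eq]
  exact mul_nonpos_of_nonpos_of_nonneg (by linarith)
    (sub_nonneg.2 (pow_le_one₀ (by norm_num) (by norm_num)))

lemma strictMono_U {v k : ℝ} (h : 2 * k < v) : StrictMono (U v k) := by
  intro m n hmn
  simp only [U_eq]
  exact mul_lt_mul_of_pos_left
    (sub_lt_sub_left (pow_lt_pow_right_of_lt_one₀ (by norm_num) (by norm_num) hmn) 1)
    (by linarith)

lemma tendsto_U (v k : ℝ) : Tendsto (U v k) atTop (nhds (v - 2 * k)) := by
  have h := (tendsto_pow_atTop_nhds_zero_of_lt_one (r := (2⁻¹ : ℝ)) (by norm_num)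
    (by norm_num)).const_sub 1 |>.const_mul (v - 2 * k)
  rw [sub_zero, mul_one] at h
  exact h.congr fun B => (U_eq v k B).symm

/-- Optimal no-signal budget in the geometric example: (i) if v ≤ 2k then
U(v,k,B) ≤ 0 = U(v,k,0) for every B, so B* = 0 is optimal; (ii) if v > 2k then
U(v,k,B) < U(v,k,B+1) for every B, U(v,k,B) → v − 2k as B → ∞, and the supremum
of the attacker's utility is v − 2k (so no finite budget is optimal). -/
theorem geometric_optimal_budget (v k : ℝ) :
    (v ≤ 2 * k → U v k 0 = 0 ∧ ∀ B : ℕ, U v k B ≤ U v k 0) ∧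
    (2 * k < v →
      (∀ B : ℕ, U v k B < U v k (B + 1)) ∧
      Filter.Tendsto (fun B : ℕ => U v k B) Filter.atTop (nhds (v - 2 * k)) ∧
      (⨆ B : ℕ, U v k B) = v - 2 * k) := by
  refine ⟨fun hv => ⟨U_zero v k, fun B => ?_⟩,
    fun hv => ⟨fun B => strictMono_U hv B.lt_succ_self, tendsto_U v k, ?_⟩⟩
  · rw [U_zero]
    exact U_nonpos hv B
  · exact (isLUB_of_tendsto_atTop (strictMono_U hv).monotone (tendsto_U v k)).ciSup_eq
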